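/- With v̂_j(α) = (α√v_j + (1-α)√v*_j)² and v*_j = (σ_b/σ)v_j, the standardized mean of the margin, t(α) := E[M(α)]/√Var[M(α)], is an affine function of α: t(α) = K·α + C for constants K, C depending only on u, W, Γ, V, m, μ, ε, β, σ, σ_b. -/
import Mathlib


open Matrix

/-- with `v̂_j(α) = (α√v_j + (1-α)√v*_j)²` and `v*_j = (σ_b/σ)v_j`, the
standardized margin mean `t(α) = E[M(α)]/√Var[M(α)]` is an affine function of `α` on `[0,1]`:
`t(α) = K·α + C` for constants `K, C`. -/
theorem standardized_mean_is_affine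
    {J d : ℕ} (u β m γ : Fin J → ℝ) (v vst mst : Fin J → ℝ) (hv : ∀ j, 0 < v j)
    (w : Fin J → Fin d → ℝ) (μ ε : Fin d → ℝ) (σ σb : ℝ) (hσ : 0 < σ) (hσb : 0 < σb)
    (hvst : ∀ j, vst j = (σb / σ) * v j)
    (hmst : ∀ j, mst j = (σb / σ) * m j + (σb / σ - 1) * (w j ⬝ᵥ μ) + w j ⬝ᵥ ε)
    (μb : Fin d → ℝ) (hμb : μb = -μ + ε)
    (shat : ℝ → Fin J → ℝ)
    (hshat : ∀ α j, shat α j = α * Real.sqrt (v j) + (1 - α) * Real.sqrt (vst j))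
    (meanM stdM t : ℝ → ℝ)
    (hmean : ∀ α, meanM α =
      ∑ j, u j * ((w j ⬝ᵥ μb - (α * m j + (1 - α) * mst j)) / shat α j * γ j + β j))
    (hstd : ∀ α, stdM α = σb * Real.sqrt (∑ i, (∑ j, u j * γ j / shat α j * w j i) ^ 2))
    (ht : ∀ α, t α = meanM α / stdM α) :
    ∃ K C : ℝ, ∀ α ∈ Set.Icc (0 : ℝ) 1, t α = K * α + C := by
  have hr : (0:ℝ) < σb / σ := div_pos hσb hσ
  set s := Real.sqrt (σb / σ) with hs_def
  have hs : 0 < s := Real.sqrt_pos.2 hr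
  have hs2 : s ^ 2 = σb / σ := Real.sq_sqrt hr.le
  set D := σb * Real.sqrt (∑ i, (∑ j, u j * γ j / Real.sqrt (v j) * w j i) ^ 2) with hD
  refine ⟨(∑ j, (u j * γ j * ((w j ⬝ᵥ ε) - (1 - s ^ 2) * ((w j ⬝ᵥ μ) + m j)) / Real.sqrt (v j)
      + (1 - s) * (u j * β j))) / D,
    (∑ j, (u j * γ j * (-(s ^ 2) * ((w j ⬝ᵥ μ) + m j)) / Real.sqrt (v j)
      + s * (u j * β j))) / D, ?_⟩
  rintro α ⟨hα0, hα1⟩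
  set c := α + (1 - α) * s with hc_def
  have hc : 0 < c := by
    rw [hc_def]
    rcases eq_or_lt_of_le hα0 with h | h
    · rw [← h]; simpa using hs
    · nlinarith [mul_nonneg (sub_nonneg.2 hα1) hs.le]
  have hsv : ∀ j, 0 < Real.sqrt (v j) := fun j => Real.sqrt_pos.2 (hv j)
  have hsh : ∀ j, shat α j = c * Real.sqrt (v j) := by
    intro j
    rw [hshat, hvst, Real.sqrt_mul hr.le, hc_def]
    ring
  have hstd' : stdM α = D / c := by
    rw [hstd]
    have h1 : ∀ i, (∑ j, u j * γ j / shat α j * w j i)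
        = (∑ j, u j * γ j / Real.sqrt (v j) * w j i) / c := by
      intro i
      rw [Finset.sum_div]
      refine Finset.sum_congr rfl fun j _ => ?_
      rw [hsh]
      field_simp
    simp only [h1, div_pow]
    rw [← Finset.sum_div, Real.sqrt_div (by positivity), Real.sqrt_sq hc.le, hD]
    ring
  have hmean' : c * meanM α =
      (∑ j, (u j * γ j * ((w j ⬝ᵥ ε) - (1 - s ^ 2) * ((w j ⬝ᵥ μ) + m j)) / Real.sqrt (v j)
        + (1 - s) * (u j * β j))) * α
      + (∑ j, (u j * γ j * (-(s ^ 2) * ((w j ⬝ᵥ μ) + m j)) / Real.sqrt (v j)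
        + s * (u j * β j))) := by
    rw [hmean, Finset.mul_sum, Finset.sum_mul, ← Finset.sum_add_distrib]
    refine Finset.sum_congr rfl fun j _ => ?_
    have hr' : σb / σ = s ^ 2 := hs2.symm
    rw [hsh, hmst, hμb, dotProduct_add, dotProduct_neg, hr']
    have hvj := (hsv j).ne'
    have hc' := hc.ne'
    field_simp
    ring
  rw [ht, hstd', div_div_eq_mul_div, mul_comm (meanM α) c, hmean', add_div,
    mul_div_right_comm]
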